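/- arXiv:0909.4509 — 2 statements merged into one kernel-verified Lean document; each statement's English description precedes it below -/
import Mathlib

section
/- (Non-Archimedean Little Picard Theorem.) Let f be an entire function on F such that f(z) ≠ 0 for every z ∈ F. Then f is constant. -/
open Filter Topology

variable {F : Type*} [NontriviallyNormedField F]

/-- Value of the power series with coefficients `a` at `z`. -/
noncomputable def psEval (a : ℕ → F) (z : F) : F := ∑' n : ℕ, a n * z ^ n

/-- Value of the Laurent series with coefficients `c` at `z`. -/
noncomputable def lEval (c : ℤ → F) (z : F) : F := ∑' n : ℤ, c n * z ^ n

/-- Gauss norm `|f|_r = sup_n |a_n| r^n` of a power series. -/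
noncomputable def pNorm (a : ℕ → F) (r : ℝ) : ℝ := ⨆ n : ℕ, ‖a n‖ * r ^ n

/-- Gauss norm `|f|_r = sup_n |c_n| r^n` of a Laurent series. -/
noncomputable def lNorm (c : ℤ → F) (r : ℝ) : ℝ := ⨆ n : ℤ, ‖c n‖ * r ^ n

/-- The Laurent series `c` is analytic on the annulus `A[r1,r2]`. -/
def LaurentOn (c : ℤ → F) (r1 r2 : ℝ) : Prop :=
  ∀ r : ℝ, r1 ≤ r → r ≤ r2 → Tendsto (fun n : ℤ => ‖c n‖ * r ^ n) cofinite (nhds 0)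

/-- The Laurent series `c` is analytic on `A[r1,∞)`. -/
def LaurentOnInfty (c : ℤ → F) (r1 : ℝ) : Prop :=
  ∀ r : ℝ, r1 ≤ r → Tendsto (fun n : ℤ => ‖c n‖ * r ^ n) cofinite (nhds 0)

/-- The power series `a` is analytic on the closed ball `B_{≤ r}`. -/
def PSOnClosed (a : ℕ → F) (r : ℝ) : Prop :=
  Tendsto (fun n : ℕ => ‖a n‖ * r ^ n) atTop (nhds 0)

/-- The power series `a` is analytic on the open ball `B_{< R}`. -/
def PSOnOpen (a : ℕ → F) (R : ℝ) : Prop :=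
  ∀ r : ℝ, 0 < r → r < R → Tendsto (fun n : ℕ => ‖a n‖ * r ^ n) atTop (nhds 0)

/-- The power series `a` is entire: it converges on all of `F`. -/
def Entire (a : ℕ → F) : Prop :=
  ∀ r : ℝ, 0 < r → Tendsto (fun n : ℕ => ‖a n‖ * r ^ n) atTop (nhds 0)

/-- `k(f,r)` for a Laurent series. -/
noncomputable def kk (c : ℤ → F) (r : ℝ) : ℤ := sInf {n : ℤ | ‖c n‖ * r ^ n = lNorm c r}

/-- `K(f,r)` for a Laurent series. -/
noncomputable def KK (c : ℤ → F) (r : ℝ) : ℤ := sSup {n : ℤ | ‖c n‖ * r ^ n = lNorm c r}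

/-- Product of two Laurent series. -/
noncomputable def laurentMul (c d : ℤ → F) : ℤ → F := fun n => ∑' i : ℤ, c i * d (n - i)

/-- The Laurent series `1`. -/
noncomputable def laurentOne : ℤ → F := fun n => if n = 0 then 1 else 0

/-- Gauss norm of a polynomial. -/
noncomputable def pgNorm (P : Polynomial F) (r : ℝ) : ℝ := ⨆ n : ℕ, ‖P.coeff n‖ * r ^ n

/-- `k(P,r)` for a polynomial. -/
noncomputable def kP (P : Polynomial F) (r : ℝ) : ℕ :=
  sInf {n : ℕ | ‖P.coeff n‖ * r ^ n = pgNorm P r}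

/-- `K(P,r)` for a polynomial. -/
noncomputable def KP (P : Polynomial F) (r : ℝ) : ℕ :=
  sSup {n : ℕ | ‖P.coeff n‖ * r ^ n = pgNorm P r}

/-- A polynomial regarded as a Laurent series. -/
noncomputable def polyToLaurent (P : Polynomial F) : ℤ → F :=
  fun n => if 0 ≤ n then P.coeff n.toNat else 0

/-- `f` vanishes to order exactly `m` at `z0`, as witnessed by a convergent local
power series expansion of `f` about `z0`. -/
def HasOrderAt (f : F → F) (z0 : F) (m : ℕ) : Prop :=
  ∃ δ > (0 : ℝ), ∃ b : ℕ → F,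
    (∀ z : F, ‖z - z0‖ < δ → f z = ∑' n : ℕ, b n * (z - z0) ^ n) ∧
    (∀ j < m, b j = 0) ∧ b m ≠ 0

/-- Order of vanishing at `0` of a power series. -/
noncomputable def ord0 (c : ℕ → F) : ℕ := sInf {n : ℕ | c n ≠ 0}

/-- Radius of convergence of a power series: the sup of the radii `r` such that
the terms `|c_j| r^j` tend to `0`. -/
noncomputable def convRadius (c : ℕ → F) : ENNReal :=
  ⨆ (r : NNReal) (_ : Tendsto (fun j : ℕ => ‖c j‖ * (r : ℝ) ^ j) atTop (nhds 0)), (r : ENNReal)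

/-!
Choose `r > 0` so that some `|a_m| r^m` with `m ≥ 1` exceeds `|a_0|`, and let `K ≥ 1` be the
largest index maximising `|a_n| r^n`. For every `N ≥ K` the truncation `f_N = ∑_{n ≤ N} a_n z^n`
has the same maximal term at the same last index `K`; over an algebraically closed ultrametric
field this index is the number of zeros of `f_N` in the disc `|z| ≤ r`, and
`|f_N(z)| r^K = |f_N|_r ∏ |z - u|` over those zeros `u`. Since `|f_{N+1}(z)| = |a_{N+1} z^{N+1}|`
at a zero `z` of `f_N`, each zero of `f_N` lies within `r (|a_{N+1}| r^{N+1} / |f|_r)^{1/K}` of a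
zero of `f_{N+1}`. Following these zeros gives a sequence whose steps tend to `0`, hence a Cauchy
sequence; its limit is a zero of `f` because the truncations are uniformly Lipschitz on the disc.
-/

namespace NonarchimedeanPicard

open Polynomial
open PowerSeries (trunc)

/-- For `d n = |a_n| r^n` the index `B` is the paper's `K(f, r)`. -/
structure IsLastArgmax {α : Type*} [Preorder α] (d : ℕ → α) (B : ℕ) : Prop where
  le : ∀ n, d n ≤ d B
  lt : ∀ n, B < n → d n < d B

theorem IsLastArgmax.unique {α : Type*} [Preorder α] {d : ℕ → α} {B B' : ℕ}
    (h : IsLastArgmax d B) (h' : IsLastArgmax d B') : B = B' := by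
  by_contra hne
  rcases Nat.lt_or_gt_of_ne hne with hlt | hlt
  · exact (h.lt B' hlt).not_ge (h'.le B)
  · exact (h'.lt B hlt).not_ge (h.le B')

theorem IsLastArgmax.pos {d : ℕ → ℝ} {B : ℕ} (h : IsLastArgmax d B) (hd : ∀ n, 0 ≤ d n) :
    0 < d B :=
  (hd (B + 1)).trans_lt (h.lt _ B.lt_succ_self)

theorem exists_isLastArgmax_of_tendsto_zero {t : ℕ → ℝ} (ht : Tendsto t atTop (𝓝 0)) {m : ℕ}
    (hm : 0 < t m) : ∃ K, IsLastArgmax t K := by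
  obtain ⟨N, hN⟩ := eventually_atTop.mp (ht.eventually (gt_mem_nhds hm))
  have hmN : m < N := not_le.mp fun h => (hN m h).false
  obtain ⟨n₀, hn₀, hmax⟩ := (Finset.range N).exists_max_image t ⟨m, Finset.mem_range.mpr hmN⟩
  have hle : ∀ n, t n ≤ t n₀ := fun n => by
    by_cases hn : n < N
    · exact hmax n (Finset.mem_range.mpr hn)
    · exact (hN n (not_lt.mp hn)).le.trans (hmax m (Finset.mem_range.mpr hmN))
  set S := (Finset.range N).filter fun n => t n = t n₀
  have hS : S.Nonempty := ⟨n₀, Finset.mem_filter.mpr ⟨hn₀, rfl⟩⟩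
  have hK : t (S.max' hS) = t n₀ := (Finset.mem_filter.mp (S.max'_mem hS)).2
  refine ⟨S.max' hS, fun n => hK ▸ hle n, fun n hn => hK ▸ (hle n).lt_of_ne fun h => ?_⟩
  by_cases hnN : n < N
  · exact hn.not_ge (S.le_max' n (Finset.mem_filter.mpr ⟨Finset.mem_range.mpr hnN, h⟩))
  · exact (hN n (not_lt.mp hnN)).not_ge (h ▸ hmax m (Finset.mem_range.mpr hmN))

section GaussTerm

variable {𝕜 : Type*} [NormedField 𝕜]

def gaussTerm (P : 𝕜[X]) (r : ℝ) (n : ℕ) : ℝ := ‖P.coeff n‖ * r ^ n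

theorem gaussTerm_nonneg (P : 𝕜[X]) {r : ℝ} (hr : 0 ≤ r) (n : ℕ) : 0 ≤ gaussTerm P r n := by
  unfold gaussTerm; positivity

theorem gaussTerm_mul_X_sub_C_zero (Q : 𝕜[X]) (w : 𝕜) (r : ℝ) :
    gaussTerm (Q * (X - C w)) r 0 = ‖w‖ * gaussTerm Q r 0 := by
  simp [gaussTerm, mul_coeff_zero, mul_comm]

theorem gaussTerm_trunc_mk (a : ℕ → 𝕜) (r : ℝ) (n i : ℕ) :
    gaussTerm (trunc n (.mk a)) r i = if i < n then ‖a i‖ * r ^ i else 0 := by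
  split_ifs with h <;> simp [gaussTerm, PowerSeries.coeff_trunc, h]

theorem eval_trunc_mk (a : ℕ → 𝕜) (n : ℕ) (z : 𝕜) :
    (trunc n (.mk a)).eval z = ∑ i ∈ Finset.range n, a i * z ^ i := by
  simpa using PowerSeries.eval₂_trunc_eq_sum_range z (RingHom.id 𝕜) n (.mk a)

theorem IsLastArgmax.gaussTerm_trunc {a : ℕ → 𝕜} {r : ℝ} (hr : 0 ≤ r) {K : ℕ}
    (hK : IsLastArgmax (fun n => ‖a n‖ * r ^ n) K) {n : ℕ} (hKn : K < n) :
    IsLastArgmax (gaussTerm (trunc n (.mk a)) r) K := by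
  have hpos : 0 < ‖a K‖ * r ^ K := hK.pos fun n => by positivity
  refine ⟨fun i => ?_, fun i hi => ?_⟩ <;>
    rw [gaussTerm_trunc_mk, gaussTerm_trunc_mk, if_pos hKn] <;> split_ifs
  exacts [hK.le i, hpos.le, hK.lt i hi, hpos]

theorem norm_eval_trunc_succ_le_of_isRoot {a : ℕ → 𝕜} {r : ℝ} {n : ℕ} {z : 𝕜} (hz : ‖z‖ ≤ r)
    (hroot : (trunc n (.mk a)).IsRoot z) :
    ‖(trunc (n + 1) (.mk a)).eval z‖ ≤ ‖a n‖ * r ^ n := by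
  rw [eval_trunc_mk, Finset.sum_range_succ, ← eval_trunc_mk, hroot.eq_zero, zero_add, norm_mul,
    norm_pow]
  gcongr

variable [IsUltrametricDist 𝕜]

theorem gaussTerm_mul_X_sub_C_succ (Q : 𝕜[X]) (w : 𝕜) {r : ℝ} (hr : 0 ≤ r) (n : ℕ) :
    gaussTerm (Q * (X - C w)) r (n + 1) ≤
        max (r * gaussTerm Q r n) (‖w‖ * gaussTerm Q r (n + 1)) ∧
      (r * gaussTerm Q r n ≠ ‖w‖ * gaussTerm Q r (n + 1) →
        gaussTerm (Q * (X - C w)) r (n + 1) =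
          max (r * gaussTerm Q r n) (‖w‖ * gaussTerm Q r (n + 1))) := by
  have hx : r * gaussTerm Q r n = ‖Q.coeff n‖ * r ^ (n + 1) := by
    rw [gaussTerm]; ring
  have hy : ‖w‖ * gaussTerm Q r (n + 1) = ‖-(Q.coeff (n + 1) * w)‖ * r ^ (n + 1) := by
    rw [gaussTerm, norm_neg, norm_mul]; ring
  have hc : 0 ≤ r ^ (n + 1) := by positivity
  rw [hx, hy, ← max_mul_of_nonneg _ _ hc, gaussTerm, coeff_mul_X_sub_C, sub_eq_add_neg]
  refine ⟨mul_le_mul_of_nonneg_right (IsUltrametricDist.norm_add_le_max _ _) hc, fun hne => ?_⟩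
  rw [IsUltrametricDist.norm_add_eq_max_of_norm_ne_norm fun h => hne (by rw [h])]

theorem IsLastArgmax.gaussTerm_mul_X_sub_C_of_norm_le {Q : 𝕜[X]} {r : ℝ} {B : ℕ}
    (hQ : IsLastArgmax (gaussTerm Q r) B) (hr : 0 < r) {w : 𝕜} (hw : ‖w‖ ≤ r) :
    IsLastArgmax (gaussTerm (Q * (X - C w)) r) (B + 1) ∧
      gaussTerm (Q * (X - C w)) r (B + 1) = r * gaussTerm Q r B := by
  have hd0 := gaussTerm_nonneg Q hr.le
  have hw_le : ∀ n, ‖w‖ * gaussTerm Q r n ≤ r * gaussTerm Q r n :=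
    fun n => mul_le_mul_of_nonneg_right hw (hd0 n)
  have hlt : ∀ n, B < n → r * gaussTerm Q r n < r * gaussTerm Q r B :=
    fun n hn => mul_lt_mul_of_pos_left (hQ.lt n hn) hr
  have hle : ∀ n, r * gaussTerm Q r n ≤ r * gaussTerm Q r B :=
    fun n => mul_le_mul_of_nonneg_left (hQ.le n) hr.le
  have hval : gaussTerm (Q * (X - C w)) r (B + 1) = r * gaussTerm Q r B := by
    have hgt := (hw_le (B + 1)).trans_lt (hlt (B + 1) B.lt_succ_self)
    rw [(gaussTerm_mul_X_sub_C_succ Q w hr.le B).2 hgt.ne', max_eq_left hgt.le]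
  refine ⟨⟨fun n => ?_, fun n hn => ?_⟩, hval⟩
  · rw [hval]
    cases n with
    | zero =>
      rw [gaussTerm_mul_X_sub_C_zero]
      exact (hw_le 0).trans (hle 0)
    | succ m =>
      exact (gaussTerm_mul_X_sub_C_succ Q w hr.le m).1.trans
        (max_le (hle m) ((hw_le _).trans (hle _)))
  · obtain ⟨m, rfl⟩ : ∃ m, n = m + 1 := ⟨n - 1, by omega⟩
    rw [hval]
    exact (gaussTerm_mul_X_sub_C_succ Q w hr.le m).1.trans_lt
      (max_lt (hlt m (by omega)) ((hw_le _).trans_lt (hlt _ (by omega))))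

theorem IsLastArgmax.gaussTerm_mul_X_sub_C_of_lt_norm {Q : 𝕜[X]} {r : ℝ} {B : ℕ}
    (hQ : IsLastArgmax (gaussTerm Q r) B) (hr : 0 < r) {w : 𝕜} (hw : r < ‖w‖) :
    IsLastArgmax (gaussTerm (Q * (X - C w)) r) B ∧
      gaussTerm (Q * (X - C w)) r B = ‖w‖ * gaussTerm Q r B := by
  have hd0 := gaussTerm_nonneg Q hr.le
  have hw0 : 0 < ‖w‖ := hr.trans hw
  have hr_lt : ∀ n, r * gaussTerm Q r n < ‖w‖ * gaussTerm Q r B := fun n =>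
    (mul_le_mul_of_nonneg_left (hQ.le n) hr.le).trans_lt
      (mul_lt_mul_of_pos_right hw (hQ.pos hd0))
  have hle : ∀ n, ‖w‖ * gaussTerm Q r n ≤ ‖w‖ * gaussTerm Q r B :=
    fun n => mul_le_mul_of_nonneg_left (hQ.le n) hw0.le
  have hval : gaussTerm (Q * (X - C w)) r B = ‖w‖ * gaussTerm Q r B := by
    cases B with
    | zero => exact gaussTerm_mul_X_sub_C_zero Q w r
    | succ m =>
      rw [(gaussTerm_mul_X_sub_C_succ Q w hr.le m).2 (hr_lt m).ne, max_eq_right (hr_lt m).le]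
  refine ⟨⟨fun n => ?_, fun n hn => ?_⟩, hval⟩
  · rw [hval]
    cases n with
    | zero => exact (gaussTerm_mul_X_sub_C_zero Q w r).trans_le (hle 0)
    | succ m =>
      exact (gaussTerm_mul_X_sub_C_succ Q w hr.le m).1.trans (max_le (hr_lt m).le (hle _))
  · obtain ⟨m, rfl⟩ : ∃ m, n = m + 1 := ⟨n - 1, by omega⟩
    rw [hval]
    exact (gaussTerm_mul_X_sub_C_succ Q w hr.le m).1.trans_lt
      (max_lt (hr_lt m) (mul_lt_mul_of_pos_left (hQ.lt _ (by omega)) hw0))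

theorem isLastArgmax_gaussTerm_C_mul_prod {c : 𝕜} (hc : c ≠ 0) {r : ℝ} (hr : 0 < r)
    (s : Multiset 𝕜) :
    IsLastArgmax (gaussTerm (C c * (s.map fun u => X - C u).prod) r)
        (Multiset.card (s.filter fun u => ‖u‖ ≤ r)) ∧
      gaussTerm (C c * (s.map fun u => X - C u).prod) r
        (Multiset.card (s.filter fun u => ‖u‖ ≤ r)) = ‖c‖ * (s.map fun u => max r ‖u‖).prod := by
  induction s using Multiset.induction_on with
  | empty =>
    simp only [Multiset.filter_zero, Multiset.card_zero, Multiset.map_zero, Multiset.prod_zero,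
      mul_one]
    have hc0 : 0 < ‖c‖ := norm_pos_iff.mpr hc
    refine ⟨⟨fun n => ?_, fun n hn => ?_⟩, by simp [gaussTerm]⟩
    · cases n <;> simp [gaussTerm, coeff_C, hc0.le]
    · simpa [gaussTerm, coeff_C, hn.ne'] using hc0
  | cons w s ih =>
    have hmul : C c * ((w ::ₘ s).map fun u => X - C u).prod =
        C c * (s.map fun u => X - C u).prod * (X - C w) := by
      rw [Multiset.map_cons, Multiset.prod_cons]; ring
    rw [hmul, Multiset.map_cons, Multiset.prod_cons]
    by_cases hw : ‖w‖ ≤ r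
    · rw [Multiset.filter_cons_of_pos (p := fun u : 𝕜 => ‖u‖ ≤ r) s hw, Multiset.card_cons,
        max_eq_left hw]
      obtain ⟨h, hval⟩ := ih.1.gaussTerm_mul_X_sub_C_of_norm_le hr hw
      exact ⟨h, by rw [hval, ih.2]; ring⟩
    · rw [not_le] at hw
      rw [Multiset.filter_cons_of_neg (p := fun u : 𝕜 => ‖u‖ ≤ r) s hw.not_ge, max_eq_right hw.le]
      obtain ⟨h, hval⟩ := ih.1.gaussTerm_mul_X_sub_C_of_lt_norm hr hw
      exact ⟨h, by rw [hval, ih.2]; ring⟩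

theorem prod_norm_sub_mul_pow_card_filter {z : 𝕜} {r : ℝ} (hz : ‖z‖ ≤ r) (s : Multiset 𝕜) :
    (s.map fun u => ‖z - u‖).prod * r ^ Multiset.card (s.filter fun u => ‖u‖ ≤ r) =
      (s.map fun u => max r ‖u‖).prod *
        ((s.filter fun u => ‖u‖ ≤ r).map fun u => ‖z - u‖).prod := by
  induction s using Multiset.induction_on with
  | empty => simp
  | cons w s ih =>
    simp only [Multiset.map_cons, Multiset.prod_cons]
    by_cases hw : ‖w‖ ≤ r
    · rw [Multiset.filter_cons_of_pos (p := fun u : 𝕜 => ‖u‖ ≤ r) s hw, Multiset.card_cons,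
        Multiset.map_cons, Multiset.prod_cons, max_eq_left hw, pow_succ]
      linear_combination (r * ‖z - w‖) * ih
    · rw [not_le] at hw
      have hzw : ‖z - w‖ = ‖w‖ := by
        rw [norm_sub_rev, sub_eq_add_neg, IsUltrametricDist.norm_add_eq_max_of_norm_ne_norm
          (by rw [norm_neg]; exact (hz.trans_lt hw).ne'), norm_neg, max_eq_left (hz.trans hw.le)]
      rw [Multiset.filter_cons_of_neg (p := fun u : 𝕜 => ‖u‖ ≤ r) s hw.not_ge, max_eq_right hw.le,
        hzw]
      linear_combination ‖w‖ * ih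

theorem IsLastArgmax.exists_root_near [IsAlgClosed 𝕜] {P : 𝕜[X]} (hP : P ≠ 0) {r : ℝ}
    (hr : 0 < r) {B : ℕ} (hB : IsLastArgmax (gaussTerm P r) B) (hB0 : 0 < B) {z : 𝕜}
    (hz : ‖z‖ ≤ r) :
    ∃ u, ‖u‖ ≤ r ∧ P.IsRoot u ∧ gaussTerm P r B * ‖z - u‖ ^ B ≤ ‖P.eval z‖ * r ^ B := by
  classical
  have hPs : C P.leadingCoeff * (P.roots.map fun u => X - C u).prod = P :=
    C_leadingCoeff_mul_prod_multiset_X_sub_C IsAlgClosed.card_roots_eq_natDegree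
  obtain ⟨hB', hval⟩ := isLastArgmax_gaussTerm_C_mul_prod (leadingCoeff_ne_zero.mpr hP) hr P.roots
  rw [hPs] at hB' hval
  set t := P.roots.filter fun u => ‖u‖ ≤ r
  have hcard : Multiset.card t = B := hB'.unique hB
  have hnorm : ‖P.eval z‖ = ‖P.leadingCoeff‖ * (P.roots.map fun u => ‖z - u‖).prod := by
    conv_lhs => rw [← hPs]
    simp only [eval_mul, eval_C, eval_multiset_prod, Multiset.map_map, Function.comp_def, eval_sub,
      eval_X, norm_mul]
    congr 1
    simpa [Multiset.map_map, Function.comp_def] using map_multiset_prod (normHom : 𝕜 →*₀ ℝ)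
      (P.roots.map fun u => z - u)
  have heval : ‖P.eval z‖ * r ^ B = gaussTerm P r B * (t.map fun u => ‖z - u‖).prod := by
    rw [hnorm, mul_assoc, ← hcard, prod_norm_sub_mul_pow_card_filter hz, hval, mul_assoc]
  obtain ⟨u, hut, hmin⟩ := t.toFinset.exists_min_image (fun u => ‖z - u‖)
    (Multiset.toFinset_nonempty.mpr (Multiset.card_pos.mp (hcard ▸ hB0)))
  rw [Multiset.mem_toFinset] at hut
  obtain ⟨hu_roots, hu_r⟩ := Multiset.mem_filter.mp hut
  refine ⟨u, hu_r, (mem_roots hP).mp hu_roots, ?_⟩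
  have hpow : ‖z - u‖ ^ B ≤ (t.map fun v => ‖z - v‖).prod := by
    rw [← hcard, ← Multiset.prod_replicate, ← Multiset.map_const']
    exact Multiset.prod_map_le_prod_map₀ _ _ (fun _ _ => norm_nonneg _)
      (fun v hv => hmin v (Multiset.mem_toFinset.mpr hv))
  rw [heval]
  exact mul_le_mul_of_nonneg_left hpow (gaussTerm_nonneg P hr.le B)

theorem norm_pow_sub_pow_mul_le {x y : 𝕜} {r : ℝ} (hx : ‖x‖ ≤ r) (hy : ‖y‖ ≤ r) (n : ℕ) :
    ‖x ^ n - y ^ n‖ * r ≤ r ^ n * ‖x - y‖ := by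
  have hr : 0 ≤ r := (norm_nonneg x).trans hx
  induction n with
  | zero => simp
  | succ n ih =>
    have hsplit : x ^ (n + 1) - y ^ (n + 1) = x ^ n * (x - y) + (x ^ n - y ^ n) * y := by ring
    rw [hsplit, pow_succ]
    calc ‖x ^ n * (x - y) + (x ^ n - y ^ n) * y‖ * r
        ≤ max (‖x‖ ^ n * ‖x - y‖ * r) (‖x ^ n - y ^ n‖ * r * ‖y‖) := by
          refine (mul_le_mul_of_nonneg_right (IsUltrametricDist.norm_add_le_max _ _) hr).trans_eq ?_
          rw [max_mul_of_nonneg _ _ hr, norm_mul, norm_mul, norm_pow,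
            mul_right_comm ‖x ^ n - y ^ n‖]
      _ ≤ r ^ n * r * ‖x - y‖ := by
          refine max_le ?_ ?_
          · rw [mul_right_comm]
            gcongr
          · calc ‖x ^ n - y ^ n‖ * r * ‖y‖ ≤ r ^ n * ‖x - y‖ * r := by gcongr
              _ = r ^ n * r * ‖x - y‖ := by ring

theorem norm_eval_sub_eval_mul_le (P : 𝕜[X]) {x y : 𝕜} {r g : ℝ} (hr : 0 < r) (hx : ‖x‖ ≤ r)
    (hy : ‖y‖ ≤ r) (hg : ∀ n, gaussTerm P r n ≤ g) :
    ‖P.eval x - P.eval y‖ * r ≤ g * ‖x - y‖ := by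
  have hg0 : 0 ≤ g := (gaussTerm_nonneg P hr.le 0).trans (hg 0)
  rw [← le_div_iff₀ hr, eval_eq_sum_range, eval_eq_sum_range, ← Finset.sum_sub_distrib]
  refine IsUltrametricDist.norm_sum_le_of_forall_le_of_nonneg (by positivity) fun n _ => ?_
  rw [← mul_sub, norm_mul, le_div_iff₀ hr, mul_assoc]
  calc ‖P.coeff n‖ * (‖x ^ n - y ^ n‖ * r) ≤ ‖P.coeff n‖ * (r ^ n * ‖x - y‖) := by
        exact mul_le_mul_of_nonneg_left (norm_pow_sub_pow_mul_le hx hy n) (norm_nonneg _)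
    _ ≤ g * ‖x - y‖ := by
        rw [← mul_assoc]
        exact mul_le_mul_of_nonneg_right (hg n) (norm_nonneg _)

end GaussTerm

theorem tendsto_zero_of_pow_le {ι : Type*} {l : Filter ι} {x y : ι → ℝ} {k : ℕ}
    (hx : ∀ i, 0 ≤ x i) (hxy : ∀ i, x i ^ k ≤ y i) (hy : Tendsto y l (𝓝 0)) :
    Tendsto x l (𝓝 0) := by
  refine tendsto_order.mpr ⟨fun b hb => Eventually.of_forall fun i => hb.trans_le (hx i),
    fun ε hε => ?_⟩
  filter_upwards [hy.eventually (gt_mem_nhds (pow_pos hε k))] with i hi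
  exact lt_of_pow_lt_pow_left₀ k hε.le ((hxy i).trans_lt hi)

variable [IsUltrametricDist F]

theorem hasSum_psEval [CompleteSpace F] {a : ℕ → F} {r : ℝ} (ha : PSOnClosed a r) {z : F}
    (hz : ‖z‖ ≤ r) : HasSum (fun n => a n * z ^ n) (psEval a z) := by
  refine (NonarchimedeanAddGroup.summable_of_tendsto_cofinite_zero ?_).hasSum
  rw [Nat.cofinite_eq_atTop]
  refine squeeze_zero_norm (fun n => ?_) ha
  rw [norm_mul, norm_pow]
  gcongr

theorem IsLastArgmax.exists_root_trunc_near [IsAlgClosed F] {a : ℕ → F} {r : ℝ} (hr : 0 < r)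
    {K : ℕ} (hK : IsLastArgmax (fun n => ‖a n‖ * r ^ n) K) (hK0 : 0 < K) {n : ℕ} (hKn : K < n)
    {z : F} (hz : ‖z‖ ≤ r) :
    ∃ u, ‖u‖ ≤ r ∧ (trunc n (.mk a)).IsRoot u ∧
      ‖a K‖ * r ^ K * ‖z - u‖ ^ K ≤ ‖(trunc n (.mk a)).eval z‖ * r ^ K := by
  have hdom := hK.gaussTerm_trunc hr.le hKn
  have hP : trunc n (.mk a) ≠ 0 := fun h => by
    simpa [h, gaussTerm] using hdom.pos (gaussTerm_nonneg _ hr.le)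
  simpa only [gaussTerm_trunc_mk, if_pos hKn] using hdom.exists_root_near hP hr hK0 hz

theorem exists_roots_trunc_tendsto [IsAlgClosed F] {a : ℕ → F} {r : ℝ} (hr : 0 < r)
    (ha : PSOnClosed a r) {K : ℕ} (hK : IsLastArgmax (fun n => ‖a n‖ * r ^ n) K) (hK0 : 0 < K) :
    ∃ w : ℕ → F, (∀ j, ‖w j‖ ≤ r) ∧ (∀ j, (trunc (K + 1 + j) (.mk a)).IsRoot (w j)) ∧
      Tendsto (fun j => w (j + 1) - w j) atTop (𝓝 0) := by
  have hnear : ∀ j (z : Metric.closedBall (0 : F) r), ∃ u : Metric.closedBall (0 : F) r,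
      (trunc (K + 1 + j) (.mk a)).IsRoot u ∧
        ‖a K‖ * r ^ K * ‖(z : F) - u‖ ^ K ≤ ‖(trunc (K + 1 + j) (.mk a)).eval (z : F)‖ * r ^ K := by
    intro j z
    obtain ⟨u, hu, hroot, hle⟩ := hK.exists_root_trunc_near hr hK0 (n := K + 1 + j) (by omega)
      (mem_closedBall_zero_iff.mp z.2)
    exact ⟨⟨u, mem_closedBall_zero_iff.mpr hu⟩, hroot, hle⟩
  choose next hroot hnext using hnear
  let w : ℕ → Metric.closedBall (0 : F) r := fun j =>
    Nat.rec (next 0 ⟨0, Metric.mem_closedBall_self hr.le⟩) (fun j z => next (j + 1) z) j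
  have hw_root : ∀ j, (trunc (K + 1 + j) (.mk a)).IsRoot (w j).1 := by
    rintro (_ | j) <;> exact hroot _ _
  have hw_r : ∀ j, ‖(w j).1‖ ≤ r := fun j => mem_closedBall_zero_iff.mp (w j).2
  refine ⟨fun j => (w j).1, hw_r, hw_root, tendsto_zero_iff_norm_tendsto_zero.mpr ?_⟩
  have hpos : 0 < ‖a K‖ * r ^ K := hK.pos fun n => by positivity
  have htail : Tendsto (fun j => ‖a (K + 1 + j)‖ * r ^ (K + 1 + j) * r ^ K / (‖a K‖ * r ^ K))
      atTop (𝓝 0) := by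
    simpa using ((ha.comp (tendsto_atTop_mono (fun j => Nat.le_add_left j (K + 1)) tendsto_id)
      ).mul_const (r ^ K)).div_const (‖a K‖ * r ^ K)
  refine tendsto_zero_of_pow_le (k := K) (fun j => norm_nonneg _) (fun j => ?_) htail
  rw [le_div_iff₀' hpos, norm_sub_rev]
  exact (hnext (j + 1) (w j)).trans (mul_le_mul_of_nonneg_right
    (norm_eval_trunc_succ_le_of_isRoot (hw_r j) (hw_root j)) (by positivity))

theorem exists_psEval_eq_zero_of_isLastArgmax [CompleteSpace F] [IsAlgClosed F] {a : ℕ → F}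
    {r : ℝ} (hr : 0 < r) (ha : PSOnClosed a r) {K : ℕ}
    (hK : IsLastArgmax (fun n => ‖a n‖ * r ^ n) K) (hK0 : 0 < K) :
    ∃ z, ‖z‖ ≤ r ∧ psEval a z = 0 := by
  obtain ⟨w, hw_r, hw_root, hw_diff⟩ := exists_roots_trunc_tendsto hr ha hK hK0
  obtain ⟨z, hz⟩ := cauchySeq_tendsto_of_complete
    (NonarchimedeanAddGroup.cauchySeq_of_tendsto_sub_nhds_zero hw_diff)
  have hzr : ‖z‖ ≤ r := le_of_tendsto' hz.norm hw_r
  refine ⟨z, hzr, ?_⟩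
  have hpartial : Tendsto (fun j => (trunc (K + 1 + j) (.mk a)).eval z)
      atTop (𝓝 (psEval a z)) := by
    simp only [eval_trunc_mk]
    exact (hasSum_psEval ha hzr).tendsto_sum_nat.comp
      (tendsto_atTop_mono (fun j => Nat.le_add_left j (K + 1)) tendsto_id)
  have hlim := (tendsto_iff_norm_sub_tendsto_zero.mp hz).const_mul (‖a K‖ * r ^ K / r)
  rw [mul_zero] at hlim
  refine tendsto_nhds_unique hpartial (squeeze_zero_norm (fun j => ?_) hlim)
  have hg : ∀ n, gaussTerm (trunc (K + 1 + j) (.mk a)) r n ≤ ‖a K‖ * r ^ K :=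
    fun n => ((hK.gaussTerm_trunc hr.le (by omega)).le n).trans_eq
      (by rw [gaussTerm_trunc_mk, if_pos (by omega)])
  rw [div_mul_eq_mul_div, le_div_iff₀ hr, norm_sub_rev, ← sub_zero (eval z _),
    ← (hw_root j).eq_zero]
  exact norm_eval_sub_eval_mul_le _ hr hzr (hw_r j) hg

end NonarchimedeanPicard

/-- **Non-Archimedean little Picard theorem.** A zero-free entire function on `F` is
constant. -/
theorem stmt14 {F : Type*} [NontriviallyNormedField F] [CompleteSpace F] [IsAlgClosed F]
    (hna : IsNonarchimedean (fun x : F => ‖x‖))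
    (a : ℕ → F) (ha : Entire a) (hzf : ∀ z : F, psEval a z ≠ 0) :
    ∃ u : F, ∀ z : F, psEval a z = u := by
  have := IsUltrametricDist.isUltrametricDist_of_isNonarchimedean_norm hna
  by_cases hconst : ∀ n, n ≠ 0 → a n = 0
  · refine ⟨a 0, fun z => ?_⟩
    rw [psEval, tsum_eq_single 0 fun n hn => by rw [hconst n hn, zero_mul]]
    simp
  push Not at hconst
  obtain ⟨m, hm, ham⟩ := hconst
  obtain ⟨r, hr_big, hr⟩ : ∃ r, ‖a 0‖ < ‖a m‖ * r ^ m ∧ 0 < r :=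
    ((((tendsto_pow_atTop hm).const_mul_atTop (norm_pos_iff.mpr ham)).eventually_gt_atTop _).and
      (eventually_gt_atTop 0)).exists
  obtain ⟨K, hK⟩ := NonarchimedeanPicard.exists_isLastArgmax_of_tendsto_zero (ha r hr)
    ((norm_nonneg _).trans_lt hr_big)
  have hK0 : 0 < K := Nat.pos_of_ne_zero fun hK0 => by
    have := hK.le m
    simp only [hK0, pow_zero, mul_one] at this
    exact this.not_gt hr_big
  obtain ⟨z, -, hz⟩ :=
    NonarchimedeanPicard.exists_psEval_eq_zero_of_isLastArgmax hr (ha r hr) hK hK0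
  exact absurd hz (hzf z)
end

section
/- Let (z_n)_{n≥1} be a sequence of distinct nonzero elements of F with |z_n| → ∞, let (m_n)_{n≥1} be positive integers, and let m_0 be a non-negative integer. Then the partial products of z^{m_0} ∏_{n=1}^∞ (1 − z/z_n)^{m_n} converge, with respect to the Gauss norm |·|_r for every r > 0, to an entire function f on F which has a zero of multiplicity m_0 at 0, a zero of multiplicity m_n at each z_n, and no other zeros. -/
/-!
For `r > 0` the Gauss norm `|·|_r` on `F[X]` is multiplicative and ultrametric. Once
`|z_N| ≥ r`, the factor `(1 - X/z_N)^{m_N}` has `|·|_r`-distance at most `r/|z_N|` from `1`, so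
the partial products stop growing in `|·|_r` and consecutive ones differ by `O(r/|z_N|) → 0`.
In an ultrametric space this makes them Cauchy, coefficientwise uniformly for every `r`, and the
limit `f` is entire; evaluation passes to the limit.

For `|z_k| > |w|` the factor `1 - w/z_k` has norm one, so `|f(w)|` equals the norm of a finite
partial product at `w`, which is nonzero unless `w` is `0` or some `z_n`. Since a Taylor shift by a point of the disc
`|z| ≤ r` does not increase `|·|_r`, the partial products also converge after re-expansion about
`z_n`, where for `N > n` they are `(X - z_n)^{m_n}` times a polynomial whose value at `z_n` has
eventually constant nonzero norm; this gives the multiplicity `m_n`.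
-/

open Filter Topology

variable {F : Type*} [NontriviallyNormedField F]

open Polynomial Finset

local notation "𝔳" => NormedField.toAbsoluteValue _

section GaussNorm

variable {K : Type*} [NormedField K] {r : ℝ}

lemma gaussNorm_le_of_forall_le {P : K[X]} {C : ℝ} (h : ∀ j, ‖P.coeff j‖ * r ^ j ≤ C) :
    P.gaussNorm 𝔳 r ≤ C := by
  obtain ⟨i, hi⟩ := exists_eq_gaussNorm 𝔳 r P
  exact hi ▸ h i

lemma gaussNorm_one : (1 : K[X]).gaussNorm 𝔳 r = 1 := by
  simpa using gaussNorm_C 𝔳 r (1 : K)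

variable [IsUltrametricDist K]

lemma gaussNorm_add_le_max (hr : 0 ≤ r) (P Q : K[X]) :
    (P + Q).gaussNorm 𝔳 r ≤ max (P.gaussNorm 𝔳 r) (Q.gaussNorm 𝔳 r) :=
  isNonarchimedean_gaussNorm 𝔳 IsUltrametricDist.isNonarchimedean_norm hr P Q

lemma gaussNorm_mul_eq (hr : 0 < r) (P Q : K[X]) :
    (P * Q).gaussNorm 𝔳 r = P.gaussNorm 𝔳 r * Q.gaussNorm 𝔳 r :=
  gaussNorm_mul IsUltrametricDist.isNonarchimedean_norm hr P Q

lemma gaussNorm_pow_sub_one_le (hr : 0 < r) {P : K[X]} {ε : ℝ} (hε : ε ≤ 1)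
    (hP : (P - 1).gaussNorm 𝔳 r ≤ ε) (m : ℕ) : (P ^ m - 1).gaussNorm 𝔳 r ≤ ε := by
  have hP1 : P.gaussNorm 𝔳 r ≤ 1 :=
    calc P.gaussNorm 𝔳 r = (P - 1 + 1).gaussNorm 𝔳 r := by rw [sub_add_cancel]
      _ ≤ 1 := (gaussNorm_add_le_max hr.le _ _).trans (by simp [gaussNorm_one, hP.trans hε])
  induction m with
  | zero => simpa using (gaussNorm_nonneg 𝔳 (P - 1) hr.le).trans hP
  | succ m ih =>
    rw [show P ^ (m + 1) - 1 = (P ^ m - 1) * P + (P - 1) by ring]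
    refine (gaussNorm_add_le_max hr.le _ _).trans (max_le ?_ hP)
    rw [gaussNorm_mul_eq hr]
    nlinarith [gaussNorm_nonneg 𝔳 (P ^ m - 1) hr.le, gaussNorm_nonneg 𝔳 P hr.le]

lemma gaussNorm_one_sub_C_mul_X_pow_sub_one_le (hr : 0 < r) {u : K} (hu : ‖u‖ * r ≤ 1)
    (m : ℕ) : ((1 - C u * X) ^ m - 1).gaussNorm 𝔳 r ≤ ‖u‖ * r := by
  refine gaussNorm_pow_sub_one_le hr hu (le_of_eq ?_) m
  rw [show (1 - C u * X - 1 : K[X]) = monomial 1 (-u) by simp [← C_mul_X_eq_monomial],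
    gaussNorm_monomial]
  simp [NormedField.toAbsoluteValue]

/-- The coefficients of `P(X + z₀)` are the sums `∑ᵢ binom(i+k, k) P_{i+k} z₀ⁱ`, and integers have
norm at most one. -/
lemma gaussNorm_taylor_le (hr : 0 < r) {z₀ : K} (hz₀ : ‖z₀‖ ≤ r) (P : K[X]) :
    (taylor z₀ P).gaussNorm 𝔳 r ≤ P.gaussNorm 𝔳 r := by
  refine gaussNorm_le_of_forall_le fun k => ?_
  have hrk : 0 < r ^ k := pow_pos hr k
  rw [← le_div_iff₀ hrk, taylor_coeff, eval_eq_sum_range]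
  refine IsUltrametricDist.norm_sum_le_of_forall_le_of_nonneg
    (div_nonneg (gaussNorm_nonneg 𝔳 P hr.le) hrk.le) fun i _ => ?_
  rw [hasseDeriv_coeff, le_div_iff₀ hrk, norm_mul, norm_mul, norm_pow]
  calc ‖((i + k).choose k : K)‖ * ‖P.coeff (i + k)‖ * ‖z₀‖ ^ i * r ^ k
      ≤ 1 * ‖P.coeff (i + k)‖ * r ^ i * r ^ k := by
        gcongr
        exact IsUltrametricDist.norm_natCast_le_one K _
    _ = ‖P.coeff (i + k)‖ * r ^ (i + k) := by ring
    _ ≤ P.gaussNorm 𝔳 r := le_gaussNorm 𝔳 P hr.le _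

end GaussNorm

section GaussConvergence

variable {K : Type*} [NormedField K] {P : ℕ → K[X]} {a : ℕ → K} {r : ℝ}

/-- Convergence in the Gauss norm `|·|_r`, stated coefficientwise: `pNorm` is an `iSup` and thus
junk for unbounded coefficient sequences. -/
def GaussTendsto (P : ℕ → K[X]) (a : ℕ → K) (r : ℝ) : Prop :=
  ∀ η > 0, ∀ᶠ N in atTop, ∀ j, ‖(P N).coeff j - a j‖ * r ^ j ≤ η

lemma GaussTendsto.tendsto_norm_mul_pow (h : GaussTendsto P a r) (hr : 0 ≤ r) :
    Tendsto (fun j => ‖a j‖ * r ^ j) atTop (𝓝 0) := by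
  rw [Metric.tendsto_atTop]
  intro ε hε
  obtain ⟨N, hN⟩ := (h (ε / 2) (half_pos hε)).exists
  refine ⟨(P N).natDegree + 1, fun j hj => ?_⟩
  have := hN j
  rw [coeff_eq_zero_of_natDegree_lt (by omega), zero_sub, norm_neg] at this
  rw [Real.dist_eq, sub_zero, abs_of_nonneg (by positivity)]
  linarith

variable [IsUltrametricDist K]

lemma gaussNorm_sub_le_of_forall_succ_sub_le (hr : 0 ≤ r) {η : ℝ} (hη : 0 ≤ η) {N : ℕ}
    (h : ∀ k ≥ N, (P (k + 1) - P k).gaussNorm 𝔳 r ≤ η) (M : ℕ) (hM : N ≤ M) :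
    (P M - P N).gaussNorm 𝔳 r ≤ η := by
  induction M, hM using Nat.le_induction with
  | base => simpa using hη
  | succ M hNM ih =>
    rw [show P (M + 1) - P N = (P (M + 1) - P M) + (P M - P N) by abel]
    exact (gaussNorm_add_le_max hr _ _).trans (max_le (h M hNM) ih)

lemma exists_tendsto_coeff [CompleteSpace K] (hr : 0 < r)
    (hP : Tendsto (fun N => (P (N + 1) - P N).gaussNorm 𝔳 r) atTop (𝓝 0)) :
    ∃ a : ℕ → K, ∀ j, Tendsto (fun N => (P N).coeff j) atTop (𝓝 (a j)) := by
  have hcauchy (j : ℕ) : CauchySeq (fun N => (P N).coeff j) := by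
    refine NonarchimedeanAddGroup.cauchySeq_of_tendsto_sub_nhds_zero
      (squeeze_zero_norm (fun N => ?_) (by simpa using hP.div_const (r ^ j)))
    rw [le_div_iff₀ (pow_pos hr j), ← coeff_sub]
    exact le_gaussNorm 𝔳 _ hr.le j
  exact ⟨_, fun j => (cauchySeq_tendsto_of_complete (hcauchy j)).choose_spec⟩

lemma gaussTendsto_of_tendsto_coeff (hr : 0 ≤ r)
    (hP : Tendsto (fun N => (P (N + 1) - P N).gaussNorm 𝔳 r) atTop (𝓝 0))
    (ha : ∀ j, Tendsto (fun N => (P N).coeff j) atTop (𝓝 (a j))) : GaussTendsto P a r := by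
  intro η hη
  filter_upwards [eventually_forall_ge_atTop.2 (hP.eventually (ge_mem_nhds hη))] with N hN j
  have hlim : Tendsto (fun M => ‖(P M - P N).coeff j‖ * r ^ j) atTop
      (𝓝 (‖a j - (P N).coeff j‖ * r ^ j)) := by
    simpa only [coeff_sub] using (((ha j).sub_const _).norm).mul_const _
  rw [norm_sub_rev]
  refine le_of_tendsto hlim ?_
  filter_upwards [eventually_ge_atTop N] with M hM
  exact (le_gaussNorm 𝔳 _ hr j).trans (gaussNorm_sub_le_of_forall_succ_sub_le hr hη.le hN M hM)

end GaussConvergence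

section PowerSeriesEvaluation

variable {K : Type*} [NontriviallyNormedField K] {P : ℕ → K[X]} {a : ℕ → K} {r : ℝ}

lemma GaussTendsto.tendsto_pNorm (h : GaussTendsto P a r) (hr : 0 ≤ r) :
    Tendsto (fun N => pNorm (fun j => (P N).coeff j - a j) r) atTop (𝓝 0) := by
  refine tendsto_order.2 ⟨fun b hb => Eventually.of_forall fun N =>
    hb.trans_le (Real.iSup_nonneg fun j => by positivity), fun ε hε => ?_⟩
  filter_upwards [h (ε / 2) (half_pos hε)] with N hN
  exact (Real.iSup_le hN (half_pos hε).le).trans_lt (half_lt_self hε)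

variable [IsUltrametricDist K]

lemma GaussTendsto.tendsto_eval [CompleteSpace K] (h : GaussTendsto P a r) {w : K}
    (hw : ‖w‖ ≤ r) : Tendsto (fun N => (P N).eval w) atTop (𝓝 (psEval a w)) := by
  have hterm (c : ℕ → K) (j : ℕ) : ‖c j * w ^ j‖ ≤ ‖c j‖ * r ^ j := by
    rw [norm_mul, norm_pow]; gcongr
  have hsum : Summable (fun j => a j * w ^ j) :=
    NonarchimedeanAddGroup.summable_of_tendsto_cofinite_zero <| by
      rw [Nat.cofinite_eq_atTop]
      exact squeeze_zero_norm (hterm a) (h.tendsto_norm_mul_pow ((norm_nonneg w).trans hw))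
  have hP (N : ℕ) : HasSum (fun j => (P N).coeff j * w ^ j) ((P N).eval w) := by
    rw [eval_eq_sum_range]
    refine hasSum_sum_of_ne_finset_zero fun j hj => ?_
    rw [coeff_eq_zero_of_natDegree_lt (by simpa [Nat.lt_succ_iff] using hj), zero_mul]
  rw [Metric.tendsto_nhds]
  intro ε hε
  filter_upwards [h (ε / 2) (half_pos hε)] with N hN
  rw [dist_eq_norm, psEval, ← ((hP N).sub hsum.hasSum).tsum_eq]
  simp_rw [← sub_mul]
  exact (IsUltrametricDist.norm_tsum_le_of_forall_le_of_nonneg (half_pos hε).le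
    fun j => (hterm (fun j => (P N).coeff j - a j) j).trans (hN j)).trans_lt (half_lt_self hε)

theorem exists_taylor_expansion [CompleteSpace K]
    (hP : ∀ r > 0, Tendsto (fun N => (P (N + 1) - P N).gaussNorm 𝔳 r) atTop (𝓝 0))
    (ha : ∀ r > 0, GaussTendsto P a r) (z₀ : K) :
    ∃ b : ℕ → K, (∀ k, Tendsto (fun N => (taylor z₀ (P N)).coeff k) atTop (𝓝 (b k))) ∧
      ∀ w, psEval a w = psEval b (w - z₀) := by
  have hQ (r : ℝ) (hr : 0 < r) (hz₀ : ‖z₀‖ ≤ r) :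
      Tendsto (fun N => (taylor z₀ (P (N + 1)) - taylor z₀ (P N)).gaussNorm 𝔳 r) atTop (𝓝 0) :=
    squeeze_zero (fun N => gaussNorm_nonneg 𝔳 _ hr.le)
      (fun N => by rw [← map_sub]; exact gaussNorm_taylor_le hr hz₀ _) (hP r hr)
  obtain ⟨b, hb⟩ :=
    exists_tendsto_coeff (by positivity) (hQ (‖z₀‖ + 1) (by positivity) (by linarith))
  refine ⟨b, hb, fun w => ?_⟩
  set ρ := ‖w‖ + ‖z₀‖ + 1
  have hρ : 0 < ρ := by positivity
  have hb' := gaussTendsto_of_tendsto_coeff hρ.le (hQ ρ hρ (by linarith [norm_nonneg w])) hb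
  refine tendsto_nhds_unique ((ha ρ hρ).tendsto_eval (by linarith [norm_nonneg z₀])) ?_
  exact (hb'.tendsto_eval (w := w - z₀) (by linarith [norm_sub_le w z₀])).congr
    fun N => taylor_eval_sub z₀ (P N) w

end PowerSeriesEvaluation

section WeierstrassProduct

variable {K : Type*} [NormedField K]

noncomputable def weierstrassProd (z : ℕ → K) (m : ℕ → ℕ) (m₀ : ℕ) (s : Finset ℕ) : K[X] :=
  X ^ m₀ * ∏ n ∈ s, (1 - C (z n)⁻¹ * X) ^ m n

variable {z : ℕ → K} {m : ℕ → ℕ} {m₀ : ℕ} {r : ℝ}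

lemma coeff_weierstrassProd_of_lt {j : ℕ} (hj : j < m₀) (s : Finset ℕ) :
    (weierstrassProd z m m₀ s).coeff j = 0 := by
  simp [weierstrassProd, coeff_X_pow_mul', hj.not_ge]

lemma coeff_weierstrassProd_self (s : Finset ℕ) : (weierstrassProd z m m₀ s).coeff m₀ = 1 := by
  simp [weierstrassProd, coeff_X_pow_mul', coeff_zero_eq_eval_zero, eval_prod]

lemma weierstrassProd_range_succ (N : ℕ) :
    weierstrassProd z m m₀ (range (N + 1)) =
      weierstrassProd z m m₀ (range N) * (1 - C (z N)⁻¹ * X) ^ m N := by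
  simp [weierstrassProd, prod_range_succ, mul_assoc]

lemma weierstrassProd_eq_X_sub_C_pow_mul {s : Finset ℕ} {n : ℕ} (hn : n ∈ s) (hzn : z n ≠ 0) :
    weierstrassProd z m m₀ s =
      (X - C (z n)) ^ m n * (C (-(z n)⁻¹) ^ m n * weierstrassProd z m m₀ (s \ {n})) := by
  have hfactor : 1 - C (z n)⁻¹ * X = C (-(z n)⁻¹) * (X - C (z n)) := by
    rw [mul_sub, ← C_mul, neg_mul, inv_mul_cancel₀ hzn]
    simp only [C_neg, C_1]
    ring
  rw [weierstrassProd, weierstrassProd, Finset.sdiff_singleton_eq_erase,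
    ← Finset.mul_prod_erase s _ hn, hfactor, mul_pow]
  ring

lemma eval_weierstrassProd (s : Finset ℕ) (w : K) :
    (weierstrassProd z m m₀ s).eval w = w ^ m₀ * ∏ n ∈ s, (1 - (z n)⁻¹ * w) ^ m n := by
  simp [weierstrassProd, eval_prod]

lemma eval_weierstrassProd_ne_zero {s : Finset ℕ} {w : K} (hw : w ≠ 0)
    (hs : ∀ n ∈ s, w ≠ z n) : (weierstrassProd z m m₀ s).eval w ≠ 0 := by
  rw [eval_weierstrassProd]
  refine mul_ne_zero (pow_ne_zero _ hw) (Finset.prod_ne_zero_iff.2 fun n hn => pow_ne_zero _ ?_)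
  rw [sub_ne_zero, ne_comm]
  rcases eq_or_ne (z n) 0 with hzn | hzn
  · simp [hzn]
  · exact fun h => hs n hn ((inv_mul_eq_one₀ hzn).1 h).symm

lemma coeff_taylor_X_sub_C_pow_mul (z₀ : K) (μ : ℕ) (R : K[X]) (k : ℕ) :
    (taylor z₀ ((X - C z₀) ^ μ * R)).coeff k =
      if μ ≤ k then (taylor z₀ R).coeff (k - μ) else 0 := by
  simp [taylor_mul, coeff_X_pow_mul']

variable [IsUltrametricDist K]

lemma norm_one_sub_inv_mul_eq_one {u w : K} (h : ‖w‖ < ‖u‖) : ‖1 - u⁻¹ * w‖ = 1 := by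
  have hlt : ‖-(u⁻¹ * w)‖ < ‖(1 : K)‖ := by
    rw [norm_neg, norm_mul, norm_inv, norm_one, inv_mul_lt_one₀ ((norm_nonneg w).trans_lt h)]
    exact h
  rw [sub_eq_add_neg, IsUltrametricDist.norm_add_eq_max_of_norm_ne_norm hlt.ne', max_eq_left hlt.le,
    norm_one]

lemma norm_eval_weierstrassProd_of_subset {s t : Finset ℕ} {w : K} (hst : s ⊆ t)
    (h : ∀ k ∈ t \ s, ‖w‖ < ‖z k‖) :
    ‖(weierstrassProd z m m₀ t).eval w‖ = ‖(weierstrassProd z m m₀ s).eval w‖ := by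
  rw [eval_weierstrassProd, eval_weierstrassProd, ← Finset.prod_sdiff hst, norm_mul, norm_mul,
    norm_mul, norm_prod, Finset.prod_eq_one fun k hk => by
      rw [norm_pow, norm_one_sub_inv_mul_eq_one (h k hk), one_pow], one_mul]

lemma ne_zero_of_tendsto_mul_eval_weierstrassProd
    (hz : Tendsto (fun n => ‖z n‖) atTop atTop) {t : Finset ℕ} {w : K} (hw : w ≠ 0)
    (hwz : ∀ k ∉ t, w ≠ z k) {c : K} (hc : c ≠ 0) {L : K}
    (hL : Tendsto (fun N => c * (weierstrassProd z m m₀ (range N \ t)).eval w) atTop (𝓝 L)) :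
    L ≠ 0 := by
  obtain ⟨N₀, hN₀⟩ := (hz.eventually_gt_atTop ‖w‖).exists_forall_of_atTop
  have hconst : ∀ N ≥ N₀, ‖c * (weierstrassProd z m m₀ (range N \ t)).eval w‖ =
      ‖c * (weierstrassProd z m m₀ (range N₀ \ t)).eval w‖ := fun N hN => by
    rw [norm_mul, norm_mul, norm_eval_weierstrassProd_of_subset
      (Finset.sdiff_subset_sdiff (Finset.range_subset_range.2 hN) le_rfl)]
    intro k hk
    simp only [Finset.mem_sdiff, Finset.mem_range] at hk
    exact hN₀ k (not_lt.1 fun hlt => hk.2 ⟨hlt, hk.1.2⟩)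
  have hnorm := tendsto_nhds_unique hL.norm (tendsto_atTop_of_eventually_const hconst)
  rw [← norm_ne_zero_iff, hnorm, norm_ne_zero_iff]
  exact mul_ne_zero hc (eval_weierstrassProd_ne_zero hw fun k hk => hwz k (Finset.mem_sdiff.1 hk).2)

lemma gaussNorm_weierstrassProd_succ_sub_le (hr : 0 < r) {N : ℕ} (hN : r ≤ ‖z N‖) :
    (weierstrassProd z m m₀ (range (N + 1)) - weierstrassProd z m m₀ (range N)).gaussNorm 𝔳 r ≤
      (weierstrassProd z m m₀ (range N)).gaussNorm 𝔳 r * (‖z N‖⁻¹ * r) := by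
  have hu : ‖(z N)⁻¹‖ * r ≤ 1 := by
    rw [norm_inv]
    exact inv_mul_le_one_of_le₀ hN (norm_nonneg _)
  rw [weierstrassProd_range_succ, ← mul_sub_one, gaussNorm_mul_eq hr, ← norm_inv]
  exact mul_le_mul_of_nonneg_left (gaussNorm_one_sub_C_mul_X_pow_sub_one_le hr hu _)
    (gaussNorm_nonneg 𝔳 _ hr.le)

lemma gaussNorm_weierstrassProd_le (hr : 0 < r) {N₀ : ℕ} (h : ∀ k ≥ N₀, r ≤ ‖z k‖) {N : ℕ}
    (hN : N₀ ≤ N) : (weierstrassProd z m m₀ (range N)).gaussNorm 𝔳 r ≤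
      (weierstrassProd z m m₀ (range N₀)).gaussNorm 𝔳 r := by
  induction N, hN using Nat.le_induction with
  | base => rfl
  | succ N hN ih =>
    set W := fun N => weierstrassProd z m m₀ (range N)
    have hu : ‖z N‖⁻¹ * r ≤ 1 := inv_mul_le_one_of_le₀ (h N hN) (norm_nonneg _)
    calc (W (N + 1)).gaussNorm 𝔳 r = ((W (N + 1) - W N) + W N).gaussNorm 𝔳 r := by
          rw [sub_add_cancel]
      _ ≤ (W N).gaussNorm 𝔳 r := (gaussNorm_add_le_max hr.le _ _).trans <| max_le
          ((gaussNorm_weierstrassProd_succ_sub_le hr (h N hN)).trans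
            (mul_le_of_le_one_right (gaussNorm_nonneg 𝔳 _ hr.le) hu)) le_rfl
      _ ≤ _ := ih

lemma tendsto_gaussNorm_weierstrassProd_succ_sub (hz : Tendsto (fun n => ‖z n‖) atTop atTop)
    (hr : 0 < r) : Tendsto (fun N => (weierstrassProd z m m₀ (range (N + 1)) -
      weierstrassProd z m m₀ (range N)).gaussNorm 𝔳 r) atTop (𝓝 0) := by
  obtain ⟨N₀, hN₀⟩ := (hz.eventually_ge_atTop r).exists_forall_of_atTop
  have hbound : Tendsto (fun N => (weierstrassProd z m m₀ (range N₀)).gaussNorm 𝔳 r *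
      (‖z N‖⁻¹ * r)) atTop (𝓝 0) := by
    simpa using (hz.inv_tendsto_atTop.mul_const r).const_mul _
  refine squeeze_zero' (Eventually.of_forall fun N => gaussNorm_nonneg 𝔳 _ hr.le) ?_ hbound
  filter_upwards [eventually_ge_atTop N₀] with N hN
  exact (gaussNorm_weierstrassProd_succ_sub_le hr (hN₀ N hN)).trans
    (mul_le_mul_of_nonneg_right (gaussNorm_weierstrassProd_le hr hN₀ hN) (by positivity))

end WeierstrassProduct

section WeierstrassLimit

variable {K : Type*} [NontriviallyNormedField K] [IsUltrametricDist K] [CompleteSpace K]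
  {z : ℕ → K} {m : ℕ → ℕ} {m₀ : ℕ} {a : ℕ → K}

theorem hasOrderAt_of_gaussTendsto_weierstrassProd (hinj : Function.Injective z)
    (hz0 : ∀ n, z n ≠ 0) (hz : Tendsto (fun n => ‖z n‖) atTop atTop)
    (ha : ∀ r > 0, GaussTendsto (fun N => weierstrassProd z m m₀ (range N)) a r) (n : ℕ) :
    HasOrderAt (psEval a) (z n) (m n) := by
  obtain ⟨b, hb, hab⟩ := exists_taylor_expansion (P := fun N => weierstrassProd z m m₀ (range N))
    (fun r hr => tendsto_gaussNorm_weierstrassProd_succ_sub hz hr) ha (z n)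
  set R := fun N => C (-(z n)⁻¹) ^ m n * weierstrassProd z m m₀ (range N \ {n})
  have hcoeff : ∀ᶠ N in atTop, ∀ k, (taylor (z n) (weierstrassProd z m m₀ (range N))).coeff k =
      if m n ≤ k then (taylor (z n) (R N)).coeff (k - m n) else 0 := by
    filter_upwards [eventually_gt_atTop n] with N hN k
    rw [weierstrassProd_eq_X_sub_C_pow_mul (mem_range.2 hN) (hz0 n), coeff_taylor_X_sub_C_pow_mul]
  refine ⟨1, one_pos, b, fun w _ => hab w, fun k hk => ?_, ?_⟩
  · exact tendsto_nhds_unique (hb k)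
      (tendsto_const_nhds.congr' (hcoeff.mono fun N hN => by simp [hN, hk.not_ge]))
  · refine ne_zero_of_tendsto_mul_eval_weierstrassProd (m := m) (m₀ := m₀)
      (c := (-(z n)⁻¹) ^ m n) hz (hz0 n) (fun k hk => hinj.ne (Ne.symm (notMem_singleton.1 hk)))
      (pow_ne_zero _ (by simpa using hz0 n)) ((hb (m n)).congr' (hcoeff.mono fun N hN => ?_))
    rw [hN, if_pos le_rfl, Nat.sub_self, taylor_coeff_zero, eval_mul, eval_pow, eval_C]

end WeierstrassLimit

theorem stmt17_general {F : Type*} [NontriviallyNormedField F] [CompleteSpace F]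
    (hna : IsNonarchimedean (fun x : F => ‖x‖))
    (z : ℕ → F) (hinj : Function.Injective z) (hz0 : ∀ n : ℕ, z n ≠ 0)
    (hz : Filter.Tendsto (fun n : ℕ => ‖z n‖) Filter.atTop Filter.atTop)
    (m : ℕ → ℕ) (m0 : ℕ) :
    ∃ a : ℕ → F, Entire a ∧
      (∀ r : ℝ, 0 < r →
        Filter.Tendsto
          (fun N : ℕ => pNorm
            (fun j : ℕ =>
              ((Polynomial.X ^ m0 *
                ∏ n ∈ Finset.range N,
                  (1 - Polynomial.C (z n)⁻¹ * Polynomial.X) ^ m n : Polynomial F).coeff j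
                - a j)) r)
          Filter.atTop (nhds 0)) ∧
      (∀ j < m0, a j = 0) ∧ a m0 ≠ 0 ∧
      (∀ n : ℕ, HasOrderAt (psEval a) (z n) (m n)) ∧
      (∀ w : F, psEval a w = 0 → w = 0 ∨ ∃ n : ℕ, w = z n) := by
  have := IsUltrametricDist.isUltrametricDist_of_isNonarchimedean_norm hna
  have hW (r : ℝ) (hr : 0 < r) :=
    tendsto_gaussNorm_weierstrassProd_succ_sub (m := m) (m₀ := m0) hz hr
  obtain ⟨a, ha⟩ :=
    exists_tendsto_coeff (P := fun N => weierstrassProd z m m0 (range N)) one_pos (hW 1 one_pos)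
  have hGa (r : ℝ) (hr : 0 < r) : GaussTendsto (fun N => weierstrassProd z m m0 (range N)) a r :=
    gaussTendsto_of_tendsto_coeff hr.le (hW r hr) ha
  have ha_self : a m0 = 1 := tendsto_nhds_unique (ha m0) (by simp [coeff_weierstrassProd_self])
  refine ⟨a, fun r hr => (hGa r hr).tendsto_norm_mul_pow hr.le,
    fun r hr => (hGa r hr).tendsto_pNorm hr.le,
    fun j hj => tendsto_nhds_unique (ha j) (by simp [coeff_weierstrassProd_of_lt hj]),
    ha_self ▸ one_ne_zero, hasOrderAt_of_gaussTendsto_weierstrassProd hinj hz0 hz hGa,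
    fun w hw => ?_⟩
  by_contra! hwz
  refine ne_zero_of_tendsto_mul_eval_weierstrassProd (m := m) (m₀ := m0) (t := ∅) hz hwz.1
    (fun k _ => hwz.2 k) one_ne_zero ?_ hw
  simpa using (hGa (‖w‖ + 1) (by positivity)).tendsto_eval (le_add_of_nonneg_right zero_le_one)

/-- **Weierstrass products.** Given distinct nonzero `z_n` with `|z_n| → ∞`,
multiplicities `m_n ≥ 1` and `m_0 ≥ 0`, the partial products of
`z^{m_0} ∏ (1 − z/z_n)^{m_n}` converge in every Gauss norm `|·|_r` to an entire
function with a zero of multiplicity `m_0` at `0`, a zero of multiplicity `m_n` at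
each `z_n`, and no other zeros. -/
theorem stmt17 {F : Type*} [NontriviallyNormedField F] [CompleteSpace F] [IsAlgClosed F]
    (hna : IsNonarchimedean (fun x : F => ‖x‖))
    (z : ℕ → F) (hinj : Function.Injective z) (hz0 : ∀ n : ℕ, z n ≠ 0)
    (hz : Filter.Tendsto (fun n : ℕ => ‖z n‖) Filter.atTop Filter.atTop)
    (m : ℕ → ℕ) (hm : ∀ n : ℕ, 0 < m n) (m0 : ℕ) :
    ∃ a : ℕ → F, Entire a ∧
      (∀ r : ℝ, 0 < r →
        Filter.Tendsto
          (fun N : ℕ => pNorm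
            (fun j : ℕ =>
              ((Polynomial.X ^ m0 *
                ∏ n ∈ Finset.range N,
                  (1 - Polynomial.C (z n)⁻¹ * Polynomial.X) ^ m n : Polynomial F).coeff j
                - a j)) r)
          Filter.atTop (nhds 0)) ∧
      (∀ j < m0, a j = 0) ∧ a m0 ≠ 0 ∧
      (∀ n : ℕ, HasOrderAt (psEval a) (z n) (m n)) ∧
      (∀ w : F, psEval a w = 0 → w = 0 ∨ ∃ n : ℕ, w = z n) :=
  stmt17_general hna z hinj hz0 hz m m0
end
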